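/- Let R̄ ≥ 0, ε ≥ 0, and let d = (d₁, d₂) ∈ ℝ², w = (w₁, w₂) ∈ ℝ², z ∈ ℝ satisfy z ≤ ⟨d, w⟩, ‖d‖ ≤ R̄, and ‖w‖ ≤ ε. Then √( (R̄·(w₁+w₂) − ε·(d₁+d₂))² + (R̄·(w₁−w₂) − ε·(d₁−d₂))² + z² ) ≤ 2·ε·R̄ − z. -/

import Mathlib

/-!
The two rotated coordinates are those of `R • w - ε • d`, rotated by 45° and scaled by `√2`, so
the radicand is `2 ‖R • w - ε • d‖² + z²`. Expanding the norm bounds this by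
`4 (εR)² - 4 εR ⟪d, w⟫ + z² ≤ (2εR - z)²`, using `z ≤ ⟪d, w⟫ ≤ εR`.
-/

open scoped RealInnerProductSpace

lemma norm_smul_sub_smul_sq_le {E : Type*} [NormedAddCommGroup E] [InnerProductSpace ℝ E]
    {R ε : ℝ} {d w : E} (hd : ‖d‖ ≤ R) (hw : ‖w‖ ≤ ε) :
    ‖R • w - ε • d‖ ^ 2 ≤ 2 * (ε * R) ^ 2 - 2 * (ε * R) * ⟪d, w⟫ := by
  have hR : 0 ≤ R := (norm_nonneg d).trans hd
  have hε : 0 ≤ ε := (norm_nonneg w).trans hw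
  have hRw : ‖R • w‖ ≤ R * ε := by
    rw [norm_smul, Real.norm_of_nonneg hR]; gcongr
  have hεd : ‖ε • d‖ ≤ ε * R := by
    rw [norm_smul, Real.norm_of_nonneg hε]; gcongr
  have hinner : ⟪R • w, ε • d⟫ = ε * R * ⟪d, w⟫ := by
    rw [real_inner_smul_left, real_inner_smul_right, real_inner_comm]; ring
  rw [norm_sub_sq_real, hinner]
  nlinarith [norm_nonneg (R • w), norm_nonneg (ε • d)]

lemma EuclideanSpace.add_sq_add_sub_sq (x : EuclideanSpace ℝ (Fin 2)) :
    (x 0 + x 1) ^ 2 + (x 0 - x 1) ^ 2 = 2 * ‖x‖ ^ 2 := by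
  rw [EuclideanSpace.norm_sq_eq, Fin.sum_univ_two, Real.norm_eq_abs, Real.norm_eq_abs, sq_abs,
    sq_abs]
  ring

theorem rotated_mccormick_valid_general (R ε : ℝ)
    (d w : EuclideanSpace ℝ (Fin 2)) (z : ℝ)
    (hz : z ≤ ⟪d, w⟫) (hd : ‖d‖ ≤ R) (hw : ‖w‖ ≤ ε) :
    Real.sqrt ((R * (w 0 + w 1) - ε * (d 0 + d 1)) ^ 2 +
        (R * (w 0 - w 1) - ε * (d 0 - d 1)) ^ 2 + z ^ 2) ≤ 2 * ε * R - z := by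
  have hrotate : (R * (w 0 + w 1) - ε * (d 0 + d 1)) ^ 2 + (R * (w 0 - w 1) - ε * (d 0 - d 1)) ^ 2
      = 2 * ‖R • w - ε • d‖ ^ 2 := by
    rw [← EuclideanSpace.add_sq_add_sub_sq]
    simp only [PiLp.sub_apply, PiLp.smul_apply, smul_eq_mul]
    ring
  have hεR : 0 ≤ ε * R := mul_nonneg ((norm_nonneg w).trans hw) ((norm_nonneg d).trans hd)
  have hzεR : z ≤ ε * R :=
    calc z ≤ ⟪d, w⟫ := hz
      _ ≤ ‖d‖ * ‖w‖ := real_inner_le_norm d w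
      _ ≤ R * ε := mul_le_mul hd hw (norm_nonneg w) ((norm_nonneg d).trans hd)
      _ = ε * R := mul_comm R ε
  rw [hrotate, Real.sqrt_le_left (by linarith)]
  nlinarith [norm_smul_sub_smul_sq_le hd hw]

/-- The rotated McCormick inequality (equation (14)) is valid on `Z^IP_2` (Theorem 3.7). -/
theorem rotated_mccormick_valid (R ε : ℝ) (hR : 0 ≤ R) (hε : 0 ≤ ε)
    (d w : EuclideanSpace ℝ (Fin 2)) (z : ℝ)
    (hz : z ≤ ⟪d, w⟫) (hd : ‖d‖ ≤ R) (hw : ‖w‖ ≤ ε) :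
    Real.sqrt ((R * (w 0 + w 1) - ε * (d 0 + d 1)) ^ 2 +
        (R * (w 0 - w 1) - ε * (d 0 - d 1)) ^ 2 + z ^ 2) ≤ 2 * ε * R - z :=
  rotated_mccormick_valid_general R ε d w z hz hd hw
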